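/- arXiv:1206.5332 — 4 statements merged into one kernel-verified Lean document; each statement's English description precedes it below -/
import Mathlib

section
/- For every real r ≥ 1/2, the function f_r(s) = (2/(r(r+1))) s^{-r} + s/(r+1) - 1/r on [1, ∞) attains its minimum at s₀ = 2^{1/(r+1)}, and its minimum value satisfies f_r(s₀) ≥ (1/r)(2^{1/(r+1)} - 1). -/
/-!
Weighted AM–GM with weights `1/(r+1)` and `r/(r+1)`, applied to `(a/r) s^(-r)` and `s/r`, bounds
`(a/(r(r+1))) s^(-r) + s/(r+1)` below by `a^(1/(r+1))/r` for every `s > 0`, since the powers of `s`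
cancel in the geometric mean. For `a = 2` the point `s₀ = 2^(1/(r+1))` satisfies `s₀^(-r) = s₀/2`,
so the bound is attained there, and the minimum value is exactly `(s₀ - 1)/r`.
-/

open Real

lemma rpow_inv_add_one_rpow_neg {a : ℝ} (ha : 0 < a) {r : ℝ} (hr : r + 1 ≠ 0) :
    (a ^ (1 / (r + 1))) ^ (-r) = a ^ (1 / (r + 1)) / a := by
  have hexp : 1 / (r + 1) * (-r) = 1 / (r + 1) - 1 := by field_simp; ring
  rw [← rpow_mul ha.le, hexp, rpow_sub ha, rpow_one]

lemma rpow_inv_add_one_div_le {a r s : ℝ} (ha : 0 ≤ a) (hr : 0 < r) (hs : 0 < s) :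
    a ^ (1 / (r + 1)) / r ≤ a / (r * (r + 1)) * s ^ (-r) + s / (r + 1) := by
  have hr1 : 0 < r + 1 := by linarith
  have hw : 1 / (r + 1) + r / (r + 1) = 1 := by field_simp; ring
  have hamgm := geom_mean_le_arith_mean2_weighted (by positivity) (by positivity)
    (by positivity : 0 ≤ a / r * s ^ (-r)) (by positivity : 0 ≤ s / r) hw
  have hgeom : (a / r * s ^ (-r)) ^ (1 / (r + 1)) * (s / r) ^ (r / (r + 1)) = a ^ (1 / (r + 1)) / r := by
    have hs_exp : -r * (1 / (r + 1)) + r / (r + 1) = 0 := by field_simp; ring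
    rw [mul_rpow (by positivity) (by positivity), div_rpow ha hr.le, div_rpow hs.le hr.le,
      ← rpow_mul hs.le]
    calc a ^ (1 / (r + 1)) / r ^ (1 / (r + 1)) * s ^ (-r * (1 / (r + 1))) *
          (s ^ (r / (r + 1)) / r ^ (r / (r + 1)))
        = a ^ (1 / (r + 1)) * s ^ (-r * (1 / (r + 1)) + r / (r + 1)) /
            r ^ (1 / (r + 1) + r / (r + 1)) := by
          rw [rpow_add hs, rpow_add hr]; ring
      _ = a ^ (1 / (r + 1)) / r := by rw [hs_exp, hw, rpow_zero, rpow_one, mul_one]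
  have harith : 1 / (r + 1) * (a / r * s ^ (-r)) + r / (r + 1) * (s / r) =
      a / (r * (r + 1)) * s ^ (-r) + s / (r + 1) := by
    field_simp
  rwa [hgeom, harith] at hamgm

theorem stmt_9 (r : ℝ) (hr : 1 / 2 ≤ r) :
    (∀ s : ℝ, 1 ≤ s →
        (2 / (r * (r + 1))) * ((2 : ℝ) ^ (1 / (r + 1))) ^ (-r) +
            (2 : ℝ) ^ (1 / (r + 1)) / (r + 1) - 1 / r ≤
          (2 / (r * (r + 1))) * s ^ (-r) + s / (r + 1) - 1 / r) ∧
    (1 / r) * ((2 : ℝ) ^ (1 / (r + 1)) - 1) ≤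
      (2 / (r * (r + 1))) * ((2 : ℝ) ^ (1 / (r + 1))) ^ (-r) +
        (2 : ℝ) ^ (1 / (r + 1)) / (r + 1) - 1 / r := by
  have hr0 : 0 < r := by linarith
  set s₀ : ℝ := (2 : ℝ) ^ (1 / (r + 1))
  have hmin : 2 / (r * (r + 1)) * s₀ ^ (-r) + s₀ / (r + 1) = s₀ / r := by
    rw [rpow_inv_add_one_rpow_neg two_pos (by linarith)]
    field_simp
    ring
  refine ⟨fun s hs => ?_, ?_⟩
  · linarith [rpow_inv_add_one_div_le (a := 2) zero_le_two hr0 (by linarith : 0 < s)]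
  · rw [hmin]
    exact le_of_eq (by ring)
end

section
/- Let r ≥ 1/2 and R > 1 be real and define Φ_{r,3}(x) = ∫₀^x |y|^{r-1} |y+1| dy for x ∈ [-R, R]. Then there exists a constant C₁ > 0 (which may be taken as min(1, log 2)) independent of r and R such that |Φ_{r,3}(x)| ≥ (C₁ / (r(r+1))) |x|^r for all x ∈ [-R, R]. -/
/-!
On `[0, ∞)` the integrand is `y ^ (r - 1) * (1 + y)`, and on `(-∞, 0]`, after `y ↦ -t`, it is
`t ^ (r - 1) * |1 - t|`; both integrate in closed form. For `x ≥ 0` and for `-1 ≤ x < 0` the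
closed form is at least `|x| ^ r / (r (r + 1))`. For `x = -a < -1` it equals
`(r a ^ (r + 1) - (r + 1) a ^ r + 2) / (r (r + 1))`, and weighted AM-GM between `a ^ (r + 1)`
and `2` (weights `r / (r + 1)`, `1 / (r + 1)`) together with
`2 ^ (1 / (r + 1)) ≥ 1 + log 2 / (r + 1)` bounds the numerator below by `log 2 · a ^ r`.
-/

open intervalIntegral Real

variable {r : ℝ}

lemma integral_rpow_sub_one_mul_one_add_mul (hr : 0 < r) (s : ℝ) {a b : ℝ}
    (ha : 0 ≤ a) (hb : 0 ≤ b) :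
    ∫ t in a..b, t ^ (r - 1) * (1 + s * t)
      = (b ^ r - a ^ r) / r + s * ((b ^ (r + 1) - a ^ (r + 1)) / (r + 1)) := by
  calc ∫ t in a..b, t ^ (r - 1) * (1 + s * t)
      = ∫ t in a..b, (t ^ (r - 1) + s * t ^ r) := integral_congr fun t ht => by
        have ht0 : 0 ≤ t := (le_min ha hb).trans ht.1
        have : t ^ r = t ^ (r - 1) * t := by
          rw [← rpow_add_one' ht0 (by simpa using hr.ne'), sub_add_cancel]
        simp only [this]; ring
    _ = _ := by
      rw [integral_add (intervalIntegrable_rpow' (by linarith))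
        ((intervalIntegrable_rpow' (by linarith)).const_mul s), integral_const_mul,
        integral_rpow (Or.inl (by linarith)), integral_rpow (Or.inl (by linarith)), sub_add_cancel]

lemma integral_abs_rpow_mul_abs_add_one_of_nonneg (hr : 0 < r) {x : ℝ} (hx : 0 ≤ x) :
    ∫ y in (0 : ℝ)..x, |y| ^ (r - 1) * |y + 1| = x ^ r / r + x ^ (r + 1) / (r + 1) := by
  have hr1 : r + 1 ≠ 0 := by linarith
  calc ∫ y in (0 : ℝ)..x, |y| ^ (r - 1) * |y + 1|
      = ∫ y in (0 : ℝ)..x, y ^ (r - 1) * (1 + 1 * y) := integral_congr fun y hy => by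
        have hy0 : 0 ≤ y := (le_min le_rfl hx).trans hy.1
        simp only [abs_of_nonneg hy0, abs_of_nonneg (by linarith : 0 ≤ y + 1)]; ring
    _ = _ := by
      rw [integral_rpow_sub_one_mul_one_add_mul hr 1 le_rfl hx, zero_rpow hr.ne', zero_rpow hr1]
      ring

lemma integral_abs_rpow_mul_abs_add_one_neg {a : ℝ} (ha : 0 ≤ a) :
    ∫ y in (0 : ℝ)..-a, |y| ^ (r - 1) * |y + 1|
      = -∫ t in (0 : ℝ)..a, t ^ (r - 1) * |1 - t| := by
  have hflip := integral_comp_neg (a := 0) (b := a) fun y : ℝ => |y| ^ (r - 1) * |y + 1|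
  rw [neg_zero] at hflip
  rw [integral_symm, ← hflip]
  congr 1
  refine integral_congr fun t ht => ?_
  have ht0 : 0 ≤ t := (le_min le_rfl ha).trans ht.1
  simp only [abs_neg, abs_of_nonneg ht0, neg_add_eq_sub]

lemma integral_rpow_mul_abs_one_sub_of_le_one (hr : 0 < r) {a : ℝ} (ha₀ : 0 ≤ a)
    (ha₁ : a ≤ 1) :
    ∫ t in (0 : ℝ)..a, t ^ (r - 1) * |1 - t| = a ^ r / r - a ^ (r + 1) / (r + 1) := by
  have hr1 : r + 1 ≠ 0 := by linarith
  calc ∫ t in (0 : ℝ)..a, t ^ (r - 1) * |1 - t|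
      = ∫ t in (0 : ℝ)..a, t ^ (r - 1) * (1 + -1 * t) := integral_congr fun t ht => by
        have ht1 : t ≤ 1 := ht.2.trans (max_le zero_le_one ha₁)
        simp only [abs_of_nonneg (by linarith : 0 ≤ 1 - t)]; ring
    _ = _ := by
      rw [integral_rpow_sub_one_mul_one_add_mul hr (-1) le_rfl ha₀, zero_rpow hr.ne',
        zero_rpow hr1]
      ring

lemma integral_rpow_mul_abs_one_sub_of_one_le (hr : 0 < r) {a : ℝ} (ha : 1 ≤ a) :
    ∫ t in (0 : ℝ)..a, t ^ (r - 1) * |1 - t|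
      = a ^ (r + 1) / (r + 1) - a ^ r / r + 2 / (r * (r + 1)) := by
  have hint (b c : ℝ) : IntervalIntegrable (fun t : ℝ => t ^ (r - 1) * |1 - t|)
      MeasureTheory.volume b c :=
    (intervalIntegrable_rpow' (by linarith)).mul_continuousOn (by fun_prop)
  have htail : ∫ t in (1 : ℝ)..a, t ^ (r - 1) * |1 - t|
      = -∫ t in (1 : ℝ)..a, t ^ (r - 1) * (1 + -1 * t) := by
    rw [← integral_neg]
    refine integral_congr fun t ht => ?_
    have ht1 : 1 ≤ t := (le_min le_rfl ha).trans ht.1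
    simp only [abs_of_nonpos (by linarith : 1 - t ≤ 0)]; ring
  rw [← integral_add_adjacent_intervals (hint 0 1) (hint 1 a),
    integral_rpow_mul_abs_one_sub_of_le_one hr zero_le_one le_rfl, htail,
    integral_rpow_sub_one_mul_one_add_mul hr (-1) zero_le_one (by linarith), one_rpow, one_rpow]
  field_simp
  ring

lemma add_log_two_mul_rpow_le (hr : 0 < r) {a : ℝ} (ha : 0 ≤ a) :
    (r + 1 + log 2) * a ^ r ≤ r * a ^ (r + 1) + 2 := by
  have hr1 : 0 < r + 1 := by linarith
  have amgm : a ^ r * 2 ^ (1 / (r + 1)) ≤ r / (r + 1) * a ^ (r + 1) + 1 / (r + 1) * 2 := by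
    have hpow : (a ^ (r + 1)) ^ (r / (r + 1)) = a ^ r := by
      rw [← rpow_mul ha, mul_div_cancel₀ r hr1.ne']
    rw [← hpow]
    exact geom_mean_le_arith_mean2_weighted (by positivity) (by positivity) (by positivity)
      zero_le_two (by field_simp)
  have hexp : 1 + log 2 / (r + 1) ≤ 2 ^ (1 / (r + 1)) := by
    rw [rpow_def_of_pos two_pos, mul_one_div, add_comm]
    exact add_one_le_exp _
  have hmul := mul_le_mul_of_nonneg_left hexp (rpow_nonneg ha r)
  calc (r + 1 + log 2) * a ^ r = (r + 1) * (a ^ r * (1 + log 2 / (r + 1))) := by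
        field_simp
    _ ≤ (r + 1) * (r / (r + 1) * a ^ (r + 1) + 1 / (r + 1) * 2) := by gcongr; linarith
    _ = r * a ^ (r + 1) + 2 := by field_simp

lemma log_two_div_mul_rpow_le_integral_abs_rpow_mul_abs_add_one (hr : 0 < r) {x : ℝ}
    (hx : 0 ≤ x) :
    log 2 / (r * (r + 1)) * x ^ r ≤ ∫ y in (0 : ℝ)..x, |y| ^ (r - 1) * |y + 1| := by
  have hlog : log 2 ≤ 1 := by linarith [log_le_sub_one_of_pos two_pos]
  have hxr : 0 ≤ x ^ r := rpow_nonneg hx r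
  have hxr1 : 0 ≤ x ^ (r + 1) := rpow_nonneg hx _
  rw [integral_abs_rpow_mul_abs_add_one_of_nonneg hr hx, div_mul_eq_mul_div,
    div_le_iff₀ (by positivity)]
  field_simp
  nlinarith

lemma log_two_div_mul_rpow_le_integral_rpow_mul_abs_one_sub (hr : 0 < r) {a : ℝ} (ha : 0 ≤ a) :
    log 2 / (r * (r + 1)) * a ^ r ≤ ∫ t in (0 : ℝ)..a, t ^ (r - 1) * |1 - t| := by
  rw [div_mul_eq_mul_div, div_le_iff₀ (by positivity)]
  rcases le_total a 1 with ha₁ | ha₁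
  · have hlog : log 2 ≤ 1 := by linarith [log_le_sub_one_of_pos two_pos]
    have hpow : a ^ (r + 1) ≤ a ^ r := by
      rw [rpow_add_one' ha (by linarith)]
      exact mul_le_of_le_one_right (rpow_nonneg ha r) ha₁
    rw [integral_rpow_mul_abs_one_sub_of_le_one hr ha ha₁]
    field_simp
    nlinarith [rpow_nonneg ha r]
  · rw [integral_rpow_mul_abs_one_sub_of_one_le hr ha₁]
    field_simp
    linarith [add_log_two_mul_rpow_le hr ha]

theorem stmt_11 :
    ∃ C₁ : ℝ, 0 < C₁ ∧ ∀ r R : ℝ, 1 / 2 ≤ r → 1 < R →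
      ∀ x : ℝ, x ∈ Set.Icc (-R) R →
        (C₁ / (r * (r + 1))) * |x| ^ r ≤ |(∫ y in (0 : ℝ)..x, |y| ^ (r - 1) * |y + 1|)| := by
  refine ⟨log 2, log_pos one_lt_two, fun r R hr _ x _ => ?_⟩
  have hr₀ : 0 < r := by linarith
  rcases le_or_gt 0 x with hx | hx
  · rw [abs_of_nonneg hx]
    exact (log_two_div_mul_rpow_le_integral_abs_rpow_mul_abs_add_one hr₀ hx).trans (le_abs_self _)
  · obtain ⟨a, ha, rfl⟩ : ∃ a, 0 < a ∧ x = -a := ⟨-x, by linarith, by ring⟩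
    rw [integral_abs_rpow_mul_abs_add_one_neg ha.le, abs_neg, abs_neg, abs_of_pos ha]
    exact (log_two_div_mul_rpow_le_integral_rpow_mul_abs_one_sub hr₀ ha.le).trans (le_abs_self _)
end

section
/- Let r ≥ 1/2, m ≥ 3, R > 1 be reals. With Φ_{r,m}(x) = ∫₀^x |y|^{r-1} |y+1|^{(m-1)/2} dy, for every x ∈ [-R, 0) one has |Φ_{r,m}(x)| / |x|^r ≥ r^{(m-3)/2} ( (∫₀^{|x|} y^{r-1} |y-1| dy) / |x|^r )^{(m-1)/2}. -/
/-! Substituting `y ↦ -y` turns `|Φ_{r,m}(x)|` into `∫₀^{|x|} y^{r-1} |y-1|^p dy` with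
`p = (m-1)/2 ≥ 1`. Jensen's inequality for the convex function `t ↦ t^p` and the probability
measure `r y^{r-1} / |x|^r dy` on `(0, |x|)` then gives the bound. For any nonnegative weight
`w`, Jensen follows by integrating against `w` the supporting line of `t ↦ t^p` at the
`w`-weighted mean `c`: `t^p ≥ c^p + p c^{p-1} (t - c)` (Bernoulli's inequality). -/

open MeasureTheory Set

namespace Real

lemma rpow_add_mul_rpow_sub_one_mul_sub_le {c t p : ℝ} (hc : 0 < c) (ht : 0 ≤ t) (hp : 1 ≤ p) :
    c ^ p + p * c ^ (p - 1) * (t - c) ≤ t ^ p := by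
  have hcp : 0 < c ^ p := rpow_pos_of_pos hc p
  have bernoulli := one_add_mul_self_le_rpow_one_add
    (show -1 ≤ t / c - 1 by linarith [div_nonneg ht hc.le]) hp
  rw [add_sub_cancel, div_rpow ht hc.le, le_div_iff₀ hcp] at bernoulli
  calc c ^ p + p * c ^ (p - 1) * (t - c) = (1 + p * (t / c - 1)) * c ^ p := by
        rw [rpow_sub_one hc.ne']; field_simp
    _ ≤ t ^ p := bernoulli

end Real

lemma integral_mul_average_rpow_le_integral_mul_rpow {α : Type*} [MeasurableSpace α]
    {μ : Measure α} {p : ℝ} (hp : 1 ≤ p) {w f : α → ℝ} (hw : 0 ≤ᵐ[μ] w) (hf : 0 ≤ᵐ[μ] f)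
    (hwi : Integrable w μ) (hwf : Integrable (fun x ↦ w x * f x) μ)
    (hwfp : Integrable (fun x ↦ w x * f x ^ p) μ) :
    (∫ x, w x ∂μ) * ((∫ x, w x * f x ∂μ) / ∫ x, w x ∂μ) ^ p ≤ ∫ x, w x * f x ^ p ∂μ := by
  set W := ∫ x, w x ∂μ
  set c := (∫ x, w x * f x ∂μ) / W
  have hrhs : 0 ≤ ∫ x, w x * f x ^ p ∂μ := integral_nonneg_of_ae <| by
    filter_upwards [hw, hf] with x hwx hfx
    exact mul_nonneg hwx (Real.rpow_nonneg hfx p)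
  have hc : 0 ≤ c := div_nonneg (integral_nonneg_of_ae <| by
    filter_upwards [hw, hf] with x hwx hfx
    exact mul_nonneg hwx hfx) (integral_nonneg_of_ae hw)
  rcases hc.eq_or_lt with hc0 | hc0
  · rw [← hc0, Real.zero_rpow (by linarith), mul_zero]
    exact hrhs
  have hW : W ≠ 0 := by rintro h; simp [c, h] at hc0
  have tangent : ∀ᵐ x ∂μ, w x * (c ^ p + p * c ^ (p - 1) * (f x - c)) ≤ w x * f x ^ p := by
    filter_upwards [hw, hf] with x hwx hfx
    exact mul_le_mul_of_nonneg_left (Real.rpow_add_mul_rpow_sub_one_mul_sub_le hc0 hfx hp) hwx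
  have hsplit : (fun x ↦ w x * (c ^ p + p * c ^ (p - 1) * (f x - c))) =
      fun x ↦ (c ^ p - p * c ^ (p - 1) * c) * w x + p * c ^ (p - 1) * (w x * f x) := by
    ext x; ring
  have hint : Integrable (fun x ↦ w x * (c ^ p + p * c ^ (p - 1) * (f x - c))) μ := by
    rw [hsplit]; exact (hwi.const_mul _).add (hwf.const_mul _)
  calc W * c ^ p
      = ∫ x, w x * (c ^ p + p * c ^ (p - 1) * (f x - c)) ∂μ := by
        have hA : ∫ x, w x * f x ∂μ = c * W := (div_mul_cancel₀ _ hW).symm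
        rw [hsplit, integral_add (hwi.const_mul _) (hwf.const_mul _), integral_const_mul,
          integral_const_mul, hA, Real.rpow_sub_one hc0.ne']
        field_simp
        ring
    _ ≤ ∫ x, w x * f x ^ p ∂μ := integral_mono_ae hint hwfp tangent

lemma rpow_mul_integral_rpow_mul_div_rpow_le {r p a : ℝ} (hr : 0 < r) (hp : 1 ≤ p) (ha : 0 < a)
    {f : ℝ → ℝ} (hfc : ContinuousOn f (uIcc 0 a)) (hf : ∀ y ∈ Icc 0 a, 0 ≤ f y) :
    r ^ (p - 1) * ((∫ y in (0 : ℝ)..a, y ^ (r - 1) * f y) / a ^ r) ^ p ≤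
      (∫ y in (0 : ℝ)..a, y ^ (r - 1) * f y ^ p) / a ^ r := by
  have hw : IntervalIntegrable (fun y : ℝ ↦ y ^ (r - 1)) volume 0 a :=
    intervalIntegral.intervalIntegrable_rpow' (by linarith)
  have hfpc : ContinuousOn (fun y ↦ f y ^ p) (uIcc 0 a) :=
    hfc.rpow_const fun _ _ ↦ Or.inr (by linarith)
  have jensen := integral_mul_average_rpow_le_integral_mul_rpow (μ := volume.restrict (Ioc 0 a))
    hp (ae_restrict_of_forall_mem measurableSet_Ioc fun y hy ↦ Real.rpow_nonneg hy.1.le _)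
    (ae_restrict_of_forall_mem measurableSet_Ioc fun y hy ↦ hf y (Ioc_subset_Icc_self hy))
    hw.1 (hw.mul_continuousOn hfc).1 (hw.mul_continuousOn hfpc).1
  have hW : ∫ y in (0 : ℝ)..a, y ^ (r - 1) = a ^ r / r := by
    rw [integral_rpow (Or.inl (by linarith)), sub_add_cancel, Real.zero_rpow hr.ne', sub_zero]
  simp only [← intervalIntegral.integral_of_le ha.le, hW] at jensen
  set A := ∫ y in (0 : ℝ)..a, y ^ (r - 1) * f y
  have har : 0 < a ^ r := Real.rpow_pos_of_pos ha r
  have hA : 0 ≤ A := intervalIntegral.integral_nonneg ha.le fun y hy ↦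
    mul_nonneg (Real.rpow_nonneg hy.1 _) (hf y hy)
  rw [le_div_iff₀ har]
  refine le_of_eq_of_le ?_ jensen
  rw [div_div_eq_mul_div, mul_comm A, mul_div_assoc, Real.mul_rpow hr.le (div_nonneg hA har.le),
    Real.rpow_sub_one hr.ne']
  field_simp

theorem stmt_13_general (r m : ℝ) (hr : 1 / 2 ≤ r) (hm : 3 ≤ m)
    (x : ℝ) (hx0 : x < 0) :
    r ^ ((m - 3) / 2) *
        ((∫ y in (0 : ℝ)..|x|, y ^ (r - 1) * |y - 1|) / |x| ^ r) ^ ((m - 1) / 2) ≤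
      |∫ y in (0 : ℝ)..x, |y| ^ (r - 1) * |y + 1| ^ ((m - 1) / 2)| / |x| ^ r := by
  have hp : 1 ≤ (m - 1) / 2 := by linarith
  set p := (m - 1) / 2
  have ha : 0 < |x| := abs_pos.mpr hx0.ne
  have reflect : ∫ y in (0 : ℝ)..x, |y| ^ (r - 1) * |y + 1| ^ p =
      -∫ y in (0 : ℝ)..|x|, y ^ (r - 1) * |y - 1| ^ p := by
    rw [intervalIntegral.integral_symm, abs_of_neg hx0, neg_inj]
    calc ∫ y in x..0, |y| ^ (r - 1) * |y + 1| ^ p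
        = ∫ y in (0 : ℝ)..-x, |-y| ^ (r - 1) * |-y + 1| ^ p := by
          rw [intervalIntegral.integral_comp_neg (fun y ↦ |y| ^ (r - 1) * |y + 1| ^ p), neg_zero,
            neg_neg]
      _ = ∫ y in (0 : ℝ)..-x, y ^ (r - 1) * |y - 1| ^ p := by
          refine intervalIntegral.integral_congr fun y hy ↦ ?_
          rw [uIcc_of_le (by linarith)] at hy
          rw [abs_neg, abs_of_nonneg hy.1, show -y + 1 = -(y - 1) by ring, abs_neg]
  have hnonneg : 0 ≤ ∫ y in (0 : ℝ)..|x|, y ^ (r - 1) * |y - 1| ^ p :=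
    intervalIntegral.integral_nonneg ha.le fun y hy ↦
      mul_nonneg (Real.rpow_nonneg hy.1 _) (Real.rpow_nonneg (abs_nonneg _) _)
  rw [reflect, abs_neg, abs_of_nonneg hnonneg, show (m - 3) / 2 = p - 1 by ring]
  exact rpow_mul_integral_rpow_mul_div_rpow_le (by linarith) hp ha
    (continuous_abs.comp (continuous_sub_right 1)).continuousOn fun _ _ ↦ abs_nonneg _

theorem stmt_13 (r m R : ℝ) (hr : 1 / 2 ≤ r) (hm : 3 ≤ m) (hR : 1 < R)
    (x : ℝ) (hx1 : -R ≤ x) (hx0 : x < 0) :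
    r ^ ((m - 3) / 2) *
        ((∫ y in (0 : ℝ)..|x|, y ^ (r - 1) * |y - 1|) / |x| ^ r) ^ ((m - 1) / 2) ≤
      |∫ y in (0 : ℝ)..x, |y| ^ (r - 1) * |y + 1| ^ ((m - 1) / 2)| / |x| ^ r :=
  stmt_13_general r m hr hm x hx0
end

section
/- Let r ≥ 1/2, m > 1, and R > 1 be real numbers, and define Φ_{r,m}(x) = ∫₀^x |y|^{r-1} |y+1|^{(m-1)/2} dy for x ∈ [-R, R]. Then there exist constants C₁ = C₁(m) > 0 and C₂ = C₂(m,R) > 0 such that for all x ∈ [-R, R]: (C₁ / r^{1 + max(1, (m-1)/2)}) |x|^r ≤ |Φ_{r,m}(x)| ≤ (C₂ / r) |x|^r. -/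
/-!
For `x ≥ 0` the weight `|y + 1| ^ α` lies between `1` and `(1 + R) ^ α` on `[0, x]`, so `Φ(x)` is
comparable to `∫₀^x t ^ (r - 1) dt = x ^ r / r`. For `x = -s < 0` the reflected weight
`|1 - t| ^ α` vanishes at `t = 1`, but it is at least `(4 r)⁻ᵅ` wherever `|1 - t| ≥ (4 r)⁻¹`.
If `s ≤ 1 + 1/r`, the interval `[0, min s (1 - (4 r)⁻¹)]` carries at least `1/8` of the mass
`s ^ r / r`, because `(1 - (4 r)⁻¹) ^ r ≥ 1/2` while `s ^ r ≤ e`; if `s > 1 + 1/r`, the upper half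
`[(1 + s)/2, s]` does, because `((1 + s)/2) ^ r ≤ 7/8 · s ^ r`. Hence
`|Φ(x)| ≥ (4 r)⁻ᵅ |x| ^ r / (8 r)`, and `(4 r)⁻ᵅ ≥ (4 r)⁻ᴹ` for `M = max 1 α` turns this into the
stated power of `r`.
-/

open Real MeasureTheory Set intervalIntegral

section WeightedPowerIntegral

variable {r s : ℝ} {w : ℝ → ℝ}

lemma le_integral_rpow_sub_one_mul (hr : 0 < r) (hw : Continuous w)
    (hw0 : ∀ t ∈ Icc 0 s, 0 ≤ w t) {a b K : ℝ} (ha : 0 ≤ a) (hab : a ≤ b) (hbs : b ≤ s)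
    (hK : ∀ t ∈ Icc a b, K ≤ w t) :
    K * ((b ^ r - a ^ r) / r) ≤ ∫ t in 0..s, t ^ (r - 1) * w t := by
  have hp : -1 < r - 1 := by linarith
  calc K * ((b ^ r - a ^ r) / r) = ∫ t in a..b, K * t ^ (r - 1) := by
        rw [intervalIntegral.integral_const_mul, integral_rpow (Or.inl hp), sub_add_cancel]
    _ ≤ ∫ t in a..b, t ^ (r - 1) * w t :=
        integral_mono_on hab ((intervalIntegrable_rpow' hp).const_mul K)
          ((intervalIntegrable_rpow' hp).mul_continuousOn hw.continuousOn)
          fun t ht => by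
            rw [mul_comm K]
            exact mul_le_mul_of_nonneg_left (hK t ht) (rpow_nonneg (ha.trans ht.1) _)
    _ ≤ ∫ t in 0..s, t ^ (r - 1) * w t := by
        refine integral_mono_interval ha hab hbs ?_
          ((intervalIntegrable_rpow' hp).mul_continuousOn hw.continuousOn)
        filter_upwards [ae_restrict_mem measurableSet_Ioc] with t ht
        exact mul_nonneg (rpow_nonneg ht.1.le _) (hw0 t (Ioc_subset_Icc_self ht))

lemma integral_rpow_sub_one_mul_le (hr : 0 < r) (hw : Continuous w) (hs : 0 ≤ s) {K : ℝ}
    (hK : ∀ t ∈ Icc 0 s, w t ≤ K) :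
    ∫ t in 0..s, t ^ (r - 1) * w t ≤ K / r * s ^ r := by
  have hp : -1 < r - 1 := by linarith
  calc ∫ t in 0..s, t ^ (r - 1) * w t ≤ ∫ t in 0..s, K * t ^ (r - 1) :=
        integral_mono_on hs ((intervalIntegrable_rpow' hp).mul_continuousOn hw.continuousOn)
          ((intervalIntegrable_rpow' hp).const_mul K) fun t ht => by
            rw [mul_comm K]
            exact mul_le_mul_of_nonneg_left (hK t ht) (rpow_nonneg ht.1 _)
    _ = K / r * s ^ r := by
        rw [intervalIntegral.integral_const_mul, integral_rpow (Or.inl hp), sub_add_cancel,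
          zero_rpow hr.ne']
        ring

end WeightedPowerIntegral

lemma half_le_one_sub_inv_four_mul_rpow {r : ℝ} (hr : 1 / 2 ≤ r) :
    1 / 2 ≤ (1 - (4 * r)⁻¹) ^ r := by
  have hr0 : 0 < r := by linarith
  have hinv : (4 * r)⁻¹ ≤ 1 / 2 := by
    rw [inv_le_comm₀ (by positivity) (by norm_num)]; linarith
  rcases le_total 1 r with h1 | h1
  · have bernoulli := one_add_mul_self_le_rpow_one_add (s := -(4 * r)⁻¹) (by linarith) h1
    have : r * -(4 * r)⁻¹ = -1 / 4 := by field_simp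
    rw [← sub_eq_add_neg, this] at bernoulli
    linarith
  · calc 1 / 2 ≤ (1 - (4 * r)⁻¹) ^ (1 : ℝ) := by rw [rpow_one]; linarith
      _ ≤ (1 - (4 * r)⁻¹) ^ r :=
          rpow_le_rpow_of_exponent_ge (by linarith) (by simp [hr0.le]) h1

lemma rpow_le_three_of_le_one_add_inv {r s : ℝ} (hr : 0 < r) (hs0 : 0 ≤ s) (hs : s ≤ 1 + r⁻¹) :
    s ^ r ≤ 3 :=
  calc s ^ r ≤ exp r⁻¹ ^ r :=
        rpow_le_rpow hs0 (by linarith [add_one_le_exp r⁻¹]) hr.le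
    _ = exp 1 := by rw [← exp_mul, inv_mul_cancel₀ hr.ne']
    _ ≤ 3 := by linarith [exp_one_lt_d9]

lemma one_add_div_two_rpow_le {r s : ℝ} (hr : 1 / 2 ≤ r) (hs : 1 + r⁻¹ < s) :
    ((1 + s) / 2) ^ r ≤ 7 / 8 * s ^ r := by
  have hr0 : 0 < r := by linarith
  have hs1 : 1 < s := by linarith [inv_pos.2 hr0]
  have hrs : 1 < r * (s - 1) := by
    have := mul_lt_mul_of_pos_left (show r⁻¹ < s - 1 by linarith) hr0
    rwa [mul_inv_cancel₀ hr0.ne'] at this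
  -- `(1 + s) / (2 s) = 1 - (s - 1) / (2 s)` and `(s - 1) / (2 s) ≥ (6 r)⁻¹` because `r (s - 1) > 1`
  have hbase : (1 + s) / 2 ≤ s * exp (-(6 * r)⁻¹) := by
    have h := add_one_le_exp (-(6 * r)⁻¹)
    have : (1 + s) / 2 ≤ s * (-(6 * r)⁻¹ + 1) := by
      rw [div_le_iff₀ (by norm_num)]
      field_simp
      nlinarith
    exact this.trans (mul_le_mul_of_nonneg_left h (by linarith))
  have hexp : exp (-(1 / 6)) ≤ 7 / 8 := by
    rw [exp_neg, inv_le_comm₀ (exp_pos _) (by norm_num)]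
    linarith [add_one_le_exp (1 / 6)]
  calc ((1 + s) / 2) ^ r ≤ (s * exp (-(6 * r)⁻¹)) ^ r :=
        rpow_le_rpow (by linarith) hbase hr0.le
    _ = exp (-(1 / 6)) * s ^ r := by
        rw [mul_rpow (by linarith) (exp_pos _).le, ← exp_mul, mul_comm]
        congr 2
        field_simp
    _ ≤ 7 / 8 * s ^ r := mul_le_mul_of_nonneg_right hexp (rpow_nonneg (by linarith) _)

section Weight

variable {α r s : ℝ}

lemma continuous_abs_add_rpow (hα : 0 ≤ α) (c d : ℝ) :
    Continuous fun t : ℝ => |c + d * t| ^ α :=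
  (continuous_const.add (continuous_const.mul continuous_id)).abs.rpow_const
    fun _ => Or.inr hα

lemma le_integral_rpow_sub_one_mul_abs_one_sub (hα : 0 ≤ α) (hr : 1 / 2 ≤ r) (hs : 0 ≤ s) :
    (4 * r) ^ (-α) * s ^ r / (8 * r) ≤ ∫ t in 0..s, t ^ (r - 1) * |1 - t| ^ α := by
  have hr0 : 0 < r := by linarith
  have hw : Continuous fun t : ℝ => |1 - t| ^ α := by
    simpa [sub_eq_add_neg] using continuous_abs_add_rpow hα 1 (-1)
  have hw0 : ∀ t ∈ Icc 0 s, 0 ≤ |1 - t| ^ α := fun t _ => by positivity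
  have weight : ∀ t : ℝ, (4 * r)⁻¹ ≤ |1 - t| → (4 * r) ^ (-α) ≤ |1 - t| ^ α := fun t ht => by
    rw [rpow_neg (by positivity), ← inv_rpow (by positivity)]
    exact rpow_le_rpow (by positivity) ht hα
  have hinv : (4 * r)⁻¹ ≤ r⁻¹ / 2 := by
    rw [mul_inv, ← div_eq_inv_mul]; linarith [inv_pos.2 hr0]
  have hinv' : r⁻¹ ≤ 2 := by rw [inv_le_comm₀ hr0 (by norm_num)]; linarith
  rcases le_or_gt s (1 + r⁻¹) with hs1 | hs1
  · obtain ⟨b, hb0, hbs, hb1, mass⟩ :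
        ∃ b, 0 ≤ b ∧ b ≤ s ∧ b ≤ 1 - (4 * r)⁻¹ ∧ s ^ r / 8 ≤ b ^ r := by
      rcases le_total s (1 - (4 * r)⁻¹) with h | h
      · exact ⟨s, hs, le_rfl, h, by linarith [rpow_nonneg hs r]⟩
      · exact ⟨1 - (4 * r)⁻¹, by linarith, h, le_rfl, by
          linarith [half_le_one_sub_inv_four_mul_rpow hr,
            rpow_le_three_of_le_one_add_inv hr0 hs hs1]⟩
    calc (4 * r) ^ (-α) * s ^ r / (8 * r) = (4 * r) ^ (-α) * (s ^ r / 8 / r) := by ring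
      _ ≤ (4 * r) ^ (-α) * ((b ^ r - 0 ^ r) / r) := by
          rw [zero_rpow hr0.ne', sub_zero]
          gcongr
      _ ≤ _ := le_integral_rpow_sub_one_mul hr0 hw hw0 le_rfl hb0 hbs fun t ht => weight t (by
          rw [abs_of_nonneg (by linarith [ht.2, inv_pos.2 (by positivity : 0 < 4 * r)])]
          linarith [ht.2])
  · have mass : s ^ r / 8 ≤ s ^ r - ((1 + s) / 2) ^ r := by
      linarith [one_add_div_two_rpow_le hr hs1]
    calc (4 * r) ^ (-α) * s ^ r / (8 * r) = (4 * r) ^ (-α) * (s ^ r / 8 / r) := by ring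
      _ ≤ (4 * r) ^ (-α) * ((s ^ r - ((1 + s) / 2) ^ r) / r) := by gcongr
      _ ≤ _ := le_integral_rpow_sub_one_mul hr0 hw hw0
          (by linarith [inv_pos.2 hr0]) (by linarith [inv_pos.2 hr0]) le_rfl
          fun t ht => weight t (by
            rw [abs_sub_comm, abs_of_nonneg (by linarith [ht.1, inv_pos.2 hr0])]
            linarith [ht.1])

lemma le_integral_rpow_sub_one_mul_abs_one_add (hα : 0 ≤ α) (hr : 1 / 2 ≤ r) (hs : 0 ≤ s) :
    (4 * r) ^ (-α) * s ^ r / (8 * r) ≤ ∫ t in 0..s, t ^ (r - 1) * |1 + t| ^ α := by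
  have hr0 : 0 < r := by linarith
  have hK : (4 * r) ^ (-α) ≤ 1 := rpow_le_one_of_one_le_of_nonpos (by linarith) (by linarith)
  calc (4 * r) ^ (-α) * s ^ r / (8 * r) = (4 * r) ^ (-α) * (s ^ r / 8 / r) := by ring
    _ ≤ (4 * r) ^ (-α) * ((s ^ r - 0 ^ r) / r) := by
        rw [zero_rpow hr0.ne', sub_zero]
        gcongr
        linarith [rpow_nonneg hs r]
    _ ≤ _ := le_integral_rpow_sub_one_mul hr0 (by simpa using continuous_abs_add_rpow hα 1 1)
        (fun t _ => by positivity) le_rfl hs le_rfl fun t ht => hK.trans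
          (one_le_rpow (by rw [abs_of_nonneg (by linarith [ht.1])]; linarith [ht.1]) hα)

end Weight

section Reduction

variable {α r : ℝ}

lemma abs_integral_eq_of_nonneg {x : ℝ} (hx : 0 ≤ x) :
    |∫ y in (0 : ℝ)..x, |y| ^ (r - 1) * |y + 1| ^ α| =
      ∫ t in (0 : ℝ)..x, t ^ (r - 1) * |1 + t| ^ α := by
  have h : ∫ y in (0 : ℝ)..x, |y| ^ (r - 1) * |y + 1| ^ α =
      ∫ t in (0 : ℝ)..x, t ^ (r - 1) * |1 + t| ^ α := by
    refine integral_congr fun t ht => ?_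
    rw [uIcc_of_le hx] at ht
    simp only [abs_of_nonneg ht.1, add_comm t]
  rw [h, abs_of_nonneg (integral_nonneg hx fun t ht => by have := ht.1; positivity)]

lemma abs_integral_eq_of_nonpos {x : ℝ} (hx : x ≤ 0) :
    |∫ y in (0 : ℝ)..x, |y| ^ (r - 1) * |y + 1| ^ α| =
      ∫ t in (0 : ℝ)..-x, t ^ (r - 1) * |1 - t| ^ α := by
  have h : ∫ y in (0 : ℝ)..x, |y| ^ (r - 1) * |y + 1| ^ α =
      -∫ t in (0 : ℝ)..-x, t ^ (r - 1) * |1 - t| ^ α := by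
    have reflect := integral_comp_neg (a := 0) (b := -x) fun y => |y| ^ (r - 1) * |y + 1| ^ α
    rw [neg_neg, neg_zero] at reflect
    rw [integral_symm, ← reflect]
    congr 1
    refine integral_congr fun t ht => ?_
    rw [uIcc_of_le (by linarith)] at ht
    simp only [abs_neg, abs_of_nonneg ht.1, neg_add_eq_sub]
  rw [h, abs_neg, abs_of_nonneg (integral_nonneg (by linarith) fun t ht => by
    have := ht.1; positivity)]

end Reduction

theorem abs_integral_rpow_mul_abs_add_one_bounds {α r R x : ℝ} (hα : 0 ≤ α) (hr : 1 / 2 ≤ r)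
    (hx : |x| ≤ R) :
    (4 * r) ^ (-α) * |x| ^ r / (8 * r) ≤ |∫ y in (0 : ℝ)..x, |y| ^ (r - 1) * |y + 1| ^ α| ∧
      |∫ y in (0 : ℝ)..x, |y| ^ (r - 1) * |y + 1| ^ α| ≤ (1 + R) ^ α / r * |x| ^ r := by
  have hr0 : 0 < r := by linarith
  have weight_le : ∀ c t, |c| = 1 → t ∈ Icc 0 |x| → |1 + c * t| ^ α ≤ (1 + R) ^ α :=
    fun c t hc ht => rpow_le_rpow (abs_nonneg _) (by
      calc |1 + c * t| ≤ 1 + |c * t| := by simpa using abs_add_le 1 (c * t)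
        _ ≤ 1 + R := by rw [abs_mul, hc, one_mul, abs_of_nonneg ht.1]; linarith [ht.2]) hα
  rcases le_total 0 x with hx0 | hx0
  · rw [abs_integral_eq_of_nonneg hx0, abs_of_nonneg hx0]
    refine ⟨le_integral_rpow_sub_one_mul_abs_one_add hα hr hx0,
      integral_rpow_sub_one_mul_le hr0 (by simpa using continuous_abs_add_rpow hα 1 1) hx0
        fun t ht => ?_⟩
    simpa using weight_le 1 t (by simp) (by rwa [abs_of_nonneg hx0])
  · rw [abs_integral_eq_of_nonpos hx0, abs_of_nonpos hx0]
    refine ⟨le_integral_rpow_sub_one_mul_abs_one_sub hα hr (by linarith),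
      integral_rpow_sub_one_mul_le hr0
        (by simpa [sub_eq_add_neg] using continuous_abs_add_rpow hα 1 (-1)) (by linarith)
        fun t ht => ?_⟩
    simpa [sub_eq_add_neg] using weight_le (-1) t (by simp) (by rwa [abs_of_nonpos hx0])

lemma div_rpow_one_add_le_rpow_neg_div {α M r : ℝ} (hr : 1 / 2 ≤ r) (hαM : α ≤ M) :
    (1 / 4) ^ M / 8 / r ^ (1 + M) ≤ (4 * r) ^ (-α) / (8 * r) := by
  have hr0 : 0 < r := by linarith
  have h : (4 * r) ^ (-M) ≤ (4 * r) ^ (-α) :=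
    rpow_le_rpow_of_exponent_le (by linarith) (by linarith)
  calc (1 / 4) ^ M / 8 / r ^ (1 + M) = (4 * r) ^ (-M) / (8 * r) := by
        rw [rpow_add hr0, rpow_one, rpow_neg (by positivity), mul_rpow (by norm_num) hr0.le,
          div_rpow (by norm_num) (by norm_num), one_rpow]
        field_simp
    _ ≤ (4 * r) ^ (-α) / (8 * r) := by gcongr

theorem stmt_14 (m : ℝ) (hm : 1 < m) :
    ∃ C₁ : ℝ, 0 < C₁ ∧ ∀ R : ℝ, 1 < R → ∃ C₂ : ℝ, 0 < C₂ ∧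
      ∀ r : ℝ, 1 / 2 ≤ r → ∀ x : ℝ, x ∈ Set.Icc (-R) R →
        (C₁ / r ^ (1 + max 1 ((m - 1) / 2))) * |x| ^ r ≤
            |∫ y in (0 : ℝ)..x, |y| ^ (r - 1) * |y + 1| ^ ((m - 1) / 2)| ∧
        |∫ y in (0 : ℝ)..x, |y| ^ (r - 1) * |y + 1| ^ ((m - 1) / 2)| ≤ (C₂ / r) * |x| ^ r := by
  have hα : 0 ≤ (m - 1) / 2 := by linarith
  refine ⟨(1 / 4) ^ max 1 ((m - 1) / 2) / 8, by positivity, fun R _ =>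
    ⟨(1 + R) ^ ((m - 1) / 2), by positivity, fun r hr x hx => ?_⟩⟩
  obtain ⟨lower, upper⟩ := abs_integral_rpow_mul_abs_add_one_bounds hα hr (abs_le.2 hx)
  refine ⟨le_trans ?_ lower, upper⟩
  rw [mul_div_right_comm]
  exact mul_le_mul_of_nonneg_right (div_rpow_one_add_le_rpow_neg_div hr (le_max_right _ _))
    (by positivity)
end
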